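/- Let G be a minimal counterexample (fewest vertices, then most edges) among planar graphs of maximum degree Δ ≥ 9 with χ₂(G) > 2Δ + 7. Then G does not contain a vertex v of degree 3 that is incident to two triangular faces and adjacent to a vertex of degree at most min(10, Δ). -/

import Mathlib

open SimpleGraph

/-- The square of a graph `G`: two distinct vertices are adjacent iff they are at
distance at most 2 in `G`. -/
def SimpleGraph.square {V : Type*} (G : SimpleGraph V) : SimpleGraph V where
  Adj u v := u ≠ v ∧ (G.Adj u v ∨ ∃ w, G.Adj u w ∧ G.Adj w v)
  symm := ⟨fun u v ⟨h1, h2⟩ => ⟨h1.symm, h2.elim (fun h => Or.inl h.symm)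
    (fun ⟨w, h3, h4⟩ => Or.inr ⟨w, h4.symm, h3.symm⟩)⟩⟩
  loopless := ⟨fun _ h => h.1 rfl⟩

/-- The 2-chromatic number of a graph: the chromatic number of its square. -/
noncomputable def chi2 {V : Type*} (G : SimpleGraph V) : ℕ∞ :=
  G.square.chromaticNumber

/-- The degree of a vertex, as a cardinality (instance-free). -/
noncomputable def degN {V : Type*} (G : SimpleGraph V) (v : V) : ℕ :=
  Nat.card {u // G.Adj v u}

/-- `G` has maximum degree `Δ`. -/
def maxDegIs {V : Type*} (G : SimpleGraph V) (Δ : ℕ) : Prop :=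
  (∀ v, degN G v ≤ Δ) ∧ ∃ v, degN G v = Δ

/-- A graph is planar if it has a drawing in the plane: an injective placement of the
vertices and, for each edge, a simple arc joining the endpoints, such that arcs avoid
all vertex points and the interiors of arcs of distinct edges are disjoint. -/
def IsPlanar {V : Type*} (G : SimpleGraph V) : Prop :=
  ∃ (pos : V → ℝ × ℝ) (arc : V → V → ℝ → ℝ × ℝ),
    Function.Injective pos ∧
    (∀ u v, G.Adj u v →
      Continuous (arc u v) ∧ arc u v 0 = pos u ∧ arc u v 1 = pos v ∧
      Set.InjOn (arc u v) (Set.Icc 0 1) ∧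
      ∀ w, pos w ∉ arc u v '' Set.Ioo 0 1) ∧
    ∀ u v x y, G.Adj u v → G.Adj x y → s(u, v) ≠ s(x, y) →
      Disjoint (arc u v '' Set.Ioo 0 1) (arc x y '' Set.Ioo 0 1)

/-- `G` is a minimal counterexample (fewest vertices, then most edges) among planar
graphs of maximum degree at most `Δ` to the bound `χ₂ ≤ 2Δ + 7`. -/
def MinimalCex (Δ : ℕ) {V : Type*} [Fintype V] (G : SimpleGraph V) : Prop :=
  IsPlanar G ∧ maxDegIs G Δ ∧ ((2 * Δ + 7 : ℕ) : ℕ∞) < chi2 G ∧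
  ∀ (n : ℕ) (H : SimpleGraph (Fin n)), IsPlanar H →
    (∀ v, degN H v ≤ Δ) →
    (n < Fintype.card V ∨
      (n = Fintype.card V ∧ Nat.card G.edgeSet < Nat.card H.edgeSet)) →
    chi2 H ≤ ((2 * Δ + 7 : ℕ) : ℕ∞)

section Comb

variable {V : Type*} [Fintype V] [DecidableEq V] (G : SimpleGraph V) [DecidableRel G.Adj]

/-- The involution exchanging the two darts of each edge. -/
def dartSymmPerm : Equiv.Perm G.Dart :=
  ⟨SimpleGraph.Dart.symm, SimpleGraph.Dart.symm,
    fun d => d.symm_symm, fun d => d.symm_symm⟩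

/-- A combinatorial plane embedding (rotation system) of `G`: a permutation of the darts
whose cycles are exactly the sets of darts sharing a tail vertex. -/
structure PlaneEmbedding where
  rot : Equiv.Perm G.Dart
  same_vertex : ∀ d d' : G.Dart, rot.SameCycle d d' ↔ d.toProd.1 = d'.toProd.1

variable {G}

/-- The face-tracing permutation of an embedding. -/
def PlaneEmbedding.facePerm (e : PlaneEmbedding G) : Equiv.Perm G.Dart :=
  e.rot * dartSymmPerm G

/-- Darts lying on the same face. -/
def PlaneEmbedding.faceSetoid (e : PlaneEmbedding G) : Setoid G.Dart :=
  ⟨e.facePerm.SameCycle,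
    ⟨fun _ => Equiv.Perm.SameCycle.refl _ _, fun h => h.symm, fun h h' => h.trans h'⟩⟩

/-- The faces of an embedding: orbits of the face-tracing permutation on darts. -/
def PlaneEmbedding.Faces (e : PlaneEmbedding G) : Type _ := Quotient e.faceSetoid

/-- The degree of a face: the number of darts on it (so cut-edges count twice). -/
noncomputable def PlaneEmbedding.faceDeg (e : PlaneEmbedding G) (f : e.Faces) : ℕ :=
  Nat.card {d : G.Dart // Quotient.mk e.faceSetoid d = f}

/-- A vertex is incident to a face if some dart of the face has it as tail. -/
def PlaneEmbedding.VertexOnFace (e : PlaneEmbedding G) (v : V) (f : e.Faces) : Prop :=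
  ∃ d : G.Dart, d.toProd.1 = v ∧ Quotient.mk e.faceSetoid d = f

/-- A vertex is triangulated if all its incident faces are triangles. -/
def PlaneEmbedding.Triangulated (e : PlaneEmbedding G) (v : V) : Prop :=
  ∀ f : e.Faces, e.VertexOnFace v f → e.faceDeg f = 3

noncomputable instance (e : PlaneEmbedding G) : Fintype e.Faces :=
  @Fintype.ofFinite _ (Quotient.finite _)

/-- The embedding is on the sphere: Euler's formula holds. -/
def PlaneEmbedding.IsSphere (e : PlaneEmbedding G) : Prop :=
  (Fintype.card V : ℤ) - G.edgeFinset.card + Nat.card e.Faces = 2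

end Comb

/-!
Let `v` be such a vertex. Around a vertex of degree 3 the rotation is a 3-cycle of darts, and
two distinct triangular faces at `v` sit at two consecutive corners, so the neighbours of `v`
are `a, b, c` with `a ~ b ~ c`. Deleting `v` keeps planarity and the degree bound, so by
minimality the square of `G - v` has a `(2Δ + 7)`-colouring; any two neighbours of `v` are
still at distance at most two through `b`, so this colours `G² - v`. Finally `v` has at most
`deg a + deg b + deg c - 4 ≤ 2Δ + min(10, Δ) - 4 < 2Δ + 7` neighbours in `G²`, leaving a
colour free for `v`.
-/

open Finset

namespace Equiv.Perm

variable {α : Type*} [Finite α]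

theorem pow_natCard_sameCycle_apply_self (σ : Perm α) (x : α) :
    (σ ^ Nat.card {y // σ.SameCycle x y}) x = x := by
  classical
  have := Fintype.ofFinite α
  by_cases hx : σ x = x
  · exact pow_apply_eq_self_of_apply_eq_self hx _
  have hcard : Nat.card {y // σ.SameCycle x y} = #(σ.cycleOf x).support := by
    rw [Nat.card_eq_fintype_card, Fintype.card_subtype]
    congr 1
    ext y
    rw [mem_support_cycleOf_iff]
    simp [mem_support.2 hx]
  rw [hcard, ← pow_mod_card_support_cycleOf_self_apply, Nat.mod_self, pow_zero, one_apply]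

theorem SameCycle.exists_pow_lt_eq {σ : Perm α} {n : ℕ} {x y : α}
    (hy : σ.SameCycle x y) (hn : 0 < n) (hx : (σ ^ n) x = x) : ∃ i < n, (σ ^ i) x = y := by
  obtain ⟨i, rfl⟩ := hy.exists_nat_pow_eq
  have hper : Function.IsPeriodicPt σ n x := by
    rw [Function.IsPeriodicPt, Function.IsFixedPt, ← coe_pow]; exact hx
  exact ⟨i % n, Nat.mod_lt _ hn, by rw [coe_pow, coe_pow, hper.iterate_mod_apply]⟩

end Equiv.Perm

namespace SimpleGraph

variable {V W : Type*}

instance [Finite V] {G : SimpleGraph V} : Finite G.Dart :=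
  Finite.of_injective _ Dart.toProd_injective

theorem degN_eq_degree [Fintype V] (G : SimpleGraph V) [DecidableRel G.Adj] (v : V) :
    degN G v = G.degree v := by
  rw [degN, Nat.card_eq_fintype_card, ← card_neighborSet_eq_degree]
  exact Fintype.card_congr (Equiv.subtypeEquivRight fun u => (G.mem_neighborSet v u).symm)

theorem degN_comap_le [Finite V] (G : SimpleGraph V) {f : W → V} (hf : Function.Injective f)
    (w : W) : degN (G.comap f) w ≤ degN G (f w) :=
  Nat.card_le_card_of_injective (fun u => ⟨f u.1, u.2⟩)
    fun _ _ h => Subtype.ext (hf (congrArg Subtype.val h))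

theorem chi2_mono_of_injective_hom {G : SimpleGraph V} {G' : SimpleGraph W} (f : G →g G')
    (hf : Function.Injective f) : chi2 G ≤ chi2 G' :=
  chromaticNumber_mono_of_hom
    { toFun := f
      map_rel' := fun ⟨hne, h⟩ => ⟨hf.ne hne, h.imp f.map_adj
        fun ⟨w, h₁, h₂⟩ => ⟨f w, f.map_adj h₁, f.map_adj h₂⟩⟩ }

theorem Colorable.of_induce_compl_singleton [Finite V] {H : SimpleGraph V} {v : V} {k : ℕ}
    (hcol : (H.induce {v}ᶜ).Colorable k) (hv : degN H v < k) : H.Colorable k := by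
  classical
  have := Fintype.ofFinite V
  obtain ⟨col⟩ := hcol
  set used : Finset (Fin k) := ((H.neighborFinset v).subtype (· ∈ ({v}ᶜ : Set V))).image col
  have hused : ∀ y (hy : y ≠ v), H.Adj v y → col ⟨y, hy⟩ ∈ used := fun y hy hvy =>
    mem_image_of_mem _ (mem_subtype.2 ((H.mem_neighborFinset v y).2 hvy))
  obtain ⟨i, -, hi⟩ : ∃ i ∈ (univ : Finset (Fin k)), i ∉ used := by
    refine exists_mem_notMem_of_card_lt_card ?_
    calc #used ≤ #(H.neighborFinset v) :=
          card_image_le.trans ((card_subtype _ _).trans_le (card_filter_le _ _))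
      _ < #(univ : Finset (Fin k)) := by
          rwa [card_neighborFinset_eq_degree, ← degN_eq_degree, card_univ, Fintype.card_fin]
  refine ⟨Coloring.mk (fun x => if hx : x = v then i else col ⟨x, hx⟩) fun {x y} hxy => ?_⟩
  by_cases hx : x = v <;> by_cases hy : y = v
  · exact absurd (hx.trans hy.symm) hxy.ne
  · subst hx
    rw [dif_pos rfl, dif_neg hy]
    exact fun h => hi (h ▸ hused y hy hxy)
  · subst hy
    rw [dif_pos rfl, dif_neg hx]
    exact fun h => hi (h ▸ hused x hx hxy.symm)
  · simpa [hx, hy] using col.valid (show (H.induce {v}ᶜ).Adj ⟨x, hx⟩ ⟨y, hy⟩ from hxy)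

variable {G : SimpleGraph V}

structure IsPathNeighborhood (G : SimpleGraph V) (v a b c : V) : Prop where
  adj_left : G.Adj v a
  adj_mid : G.Adj v b
  adj_right : G.Adj v c
  adj_left_mid : G.Adj a b
  adj_mid_right : G.Adj b c
  eq_of_adj : ∀ w, G.Adj v w → w = a ∨ w = b ∨ w = c

namespace IsPathNeighborhood

variable {v a b c : V}

theorem square_induce_le (h : G.IsPathNeighborhood v a b c) :
    G.square.induce {v}ᶜ ≤ (G.induce {v}ᶜ).square := by
  rintro ⟨x, _⟩ ⟨y, _⟩ ⟨hne, hxy⟩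
  change x ≠ y at hne
  change G.Adj x y ∨ ∃ w, G.Adj x w ∧ G.Adj w y at hxy
  refine ⟨fun h => hne (congrArg Subtype.val h), ?_⟩
  change G.Adj x y ∨ ∃ w : ({v}ᶜ : Set V), G.Adj x w ∧ G.Adj w y
  rcases hxy with hxy | ⟨w, hxw, hwy⟩
  · exact Or.inl hxy
  by_cases hw : w = v
  · subst hw
    rcases h.eq_of_adj x hxw.symm with rfl | rfl | rfl <;>
      rcases h.eq_of_adj y hwy with rfl | rfl | rfl <;>
      first
      | exact absurd rfl hne
      | exact Or.inl h.adj_left_mid | exact Or.inl h.adj_left_mid.symm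
      | exact Or.inl h.adj_mid_right | exact Or.inl h.adj_mid_right.symm
      | exact Or.inr ⟨⟨_, h.adj_mid.ne'⟩, h.adj_left_mid, h.adj_mid_right⟩
      | exact Or.inr ⟨⟨_, h.adj_mid.ne'⟩, h.adj_mid_right.symm, h.adj_left_mid.symm⟩
  · exact Or.inr ⟨⟨w, hw⟩, hxw, hwy⟩

theorem degN_square_add_four_le [Fintype V] (h : G.IsPathNeighborhood v a b c) :
    degN G.square v + 4 ≤ degN G a + degN G b + degN G c := by
  classical
  simp only [degN_eq_degree, ← card_neighborFinset_eq_degree]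
  have hsub : G.square.neighborFinset v ⊆ ((G.neighborFinset a).erase v ∪
      (G.neighborFinset b).erase v) ∪ ((G.neighborFinset c).erase v).erase b := by
    intro x hx
    obtain ⟨hvx, hx | ⟨w, hvw, hwx⟩⟩ := (mem_neighborFinset _ _ _).1 hx
    · simp only [mem_union, mem_erase, mem_neighborFinset]
      rcases h.eq_of_adj x hx with rfl | rfl | rfl
      · exact Or.inl (Or.inr ⟨hvx.symm, h.adj_left_mid.symm⟩)
      · exact Or.inl (Or.inl ⟨hvx.symm, h.adj_left_mid⟩)
      · exact Or.inl (Or.inr ⟨hvx.symm, h.adj_mid_right⟩)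
    · simp only [mem_union, mem_erase, mem_neighborFinset]
      rcases h.eq_of_adj w hvw with rfl | rfl | rfl
      · exact Or.inl (Or.inl ⟨hvx.symm, hwx⟩)
      · exact Or.inl (Or.inr ⟨hvx.symm, hwx⟩)
      · by_cases hxb : x = b
        · exact Or.inl (Or.inl ⟨hvx.symm, hxb ▸ h.adj_left_mid⟩)
        · exact Or.inr ⟨hxb, hvx.symm, hwx⟩
  have hcard := (card_le_card hsub).trans
    ((card_union_le _ _).trans (Nat.add_le_add_right (card_union_le _ _) _))
  have hvc : v ∈ G.neighborFinset c := (mem_neighborFinset _ _ _).2 h.adj_right.symm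
  have := card_erase_add_one ((mem_neighborFinset _ _ _).2 h.adj_left.symm)
  have := card_erase_add_one ((mem_neighborFinset _ _ _).2 h.adj_mid.symm)
  have := card_erase_add_one hvc
  have := card_erase_add_one
    (mem_erase.2 ⟨h.adj_mid.ne', (mem_neighborFinset _ _ _).2 h.adj_mid_right.symm⟩)
  omega

end IsPathNeighborhood

end SimpleGraph

namespace PlaneEmbedding

variable {V : Type*} {G : SimpleGraph V} (e : PlaneEmbedding G)

theorem fst_rot (d : G.Dart) : (e.rot d).fst = d.fst :=
  ((e.same_vertex d (e.rot d)).1 ⟨1, by simp⟩).symm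

theorem fst_facePerm (d : G.Dart) : (e.facePerm d).fst = d.snd :=
  e.fst_rot d.symm

theorem natCard_sameCycle_rot (d : G.Dart) :
    Nat.card {d' // e.rot.SameCycle d d'} = degN G d.fst :=
  Nat.card_congr
    { toFun := fun d' => ⟨d'.1.snd, ((e.same_vertex d d'.1).1 d'.2).symm ▸ d'.1.adj⟩
      invFun := fun u => ⟨⟨(d.fst, u.1), u.2⟩, (e.same_vertex _ _).2 rfl⟩
      left_inv := fun d' =>
        Subtype.ext (Dart.toProd_injective (Prod.ext ((e.same_vertex d d'.1).1 d'.2) rfl))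
      right_inv := fun _ => rfl }

theorem faceDeg_mk (d : G.Dart) :
    e.faceDeg (Quotient.mk e.faceSetoid d) = Nat.card {d' // e.facePerm.SameCycle d d'} :=
  Nat.card_congr (Equiv.subtypeEquivRight fun _ => Quotient.eq.trans
    ⟨Equiv.Perm.SameCycle.symm, Equiv.Perm.SameCycle.symm⟩)

theorem adj_snd_rot_of_faceDeg_eq_three [Finite V] {d : G.Dart}
    (h : e.faceDeg (Quotient.mk e.faceSetoid (e.rot d)) = 3) : G.Adj d.snd (e.rot d).snd := by
  set τ := e.facePerm
  have h3 : τ (τ (τ (e.rot d))) = e.rot d := by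
    have := Equiv.Perm.pow_natCard_sameCycle_apply_self τ (e.rot d)
    rwa [← e.faceDeg_mk, h, pow_succ, pow_succ, pow_one, Equiv.Perm.mul_apply,
      Equiv.Perm.mul_apply] at this
  -- the triangle starting at `rot d` returns through `d.symm`, so its middle dart is
  -- `(rot d).snd → d.snd`
  have hd : (τ (τ (e.rot d))).symm = d := e.rot.injective h3
  have hfst : (τ (e.rot d)).fst = (e.rot d).snd := e.fst_facePerm _
  have hsnd : (τ (e.rot d)).snd = d.snd :=
    (e.fst_facePerm _).symm.trans (congrArg (·.snd) hd)
  exact hfst ▸ hsnd ▸ (τ (e.rot d)).adj |>.symm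

theorem rot_pow_three_apply [Finite V] {d : G.Dart} (hd : degN G d.fst = 3) :
    (e.rot ^ 3) d = d := by
  have := Equiv.Perm.pow_natCard_sameCycle_apply_self e.rot d
  rwa [e.natCard_sameCycle_rot, hd] at this

theorem isPathNeighborhood_of_faceDeg_rot [Finite V] {d : G.Dart} (hd : degN G d.fst = 3)
    (h₁ : e.faceDeg (Quotient.mk e.faceSetoid (e.rot d)) = 3)
    (h₂ : e.faceDeg (Quotient.mk e.faceSetoid (e.rot (e.rot d))) = 3) :
    G.IsPathNeighborhood d.fst d.snd (e.rot d).snd (e.rot (e.rot d)).snd := by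
  refine ⟨d.adj, e.fst_rot d ▸ (e.rot d).adj, ?_, e.adj_snd_rot_of_faceDeg_eq_three h₁,
    e.adj_snd_rot_of_faceDeg_eq_three h₂, fun w hw => ?_⟩
  · simpa only [e.fst_rot] using (e.rot (e.rot d)).adj
  obtain ⟨i, hi, hiw⟩ := ((e.same_vertex d ⟨(d.fst, w), hw⟩).2 rfl).exists_pow_lt_eq
    three_pos (e.rot_pow_three_apply hd)
  have hw : ((e.rot ^ i) d).snd = w := congrArg (·.snd) hiw
  interval_cases i <;> simp [pow_succ, ← hw]

theorem exists_isPathNeighborhood [Finite V] {v : V} (hv : degN G v = 3) {f₁ f₂ : e.Faces}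
    (hne : f₁ ≠ f₂) (h₁ : e.faceDeg f₁ = 3) (h₂ : e.faceDeg f₂ = 3)
    (hv₁ : e.VertexOnFace v f₁) (hv₂ : e.VertexOnFace v f₂) :
    ∃ a b c, G.IsPathNeighborhood v a b c := by
  obtain ⟨d, rfl, rfl⟩ := hv₁
  obtain ⟨d₂, hd₂, rfl⟩ := hv₂
  have h3 := e.rot_pow_three_apply hv
  obtain ⟨i, hi, rfl⟩ := ((e.same_vertex d d₂).2 hd₂.symm).exists_pow_lt_eq three_pos h3
  replace h3 : e.rot (e.rot (e.rot d)) = d := by simpa [pow_succ] using h3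
  -- the two triangular faces sit at consecutive darts around `v`; start the path one
  -- dart before the first of them
  interval_cases i
  · exact absurd (by rw [pow_zero]; rfl) hne
  · have := e.isPathNeighborhood_of_faceDeg_rot (d := e.rot (e.rot d))
      (by simpa [fst_rot] using hv) (by rwa [h3]) (by simpa [h3] using h₂)
    exact ⟨_, _, _, by simpa [fst_rot] using this⟩
  · have := e.isPathNeighborhood_of_faceDeg_rot (d := e.rot d)
      (by simpa [fst_rot] using hv) (by simpa [pow_succ] using h₂) (by rwa [h3])
    exact ⟨_, _, _, by simpa [fst_rot] using this⟩

end PlaneEmbedding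

theorem IsPlanar.comap {V W : Type*} {G : SimpleGraph V} (h : IsPlanar G) {f : W → V}
    (hf : Function.Injective f) : IsPlanar (G.comap f) := by
  obtain ⟨pos, arc, hinj, hedge, hdisj⟩ := h
  refine ⟨pos ∘ f, fun u v => arc (f u) (f v), hinj.comp hf, ?_, ?_⟩
  · intro u v huv
    obtain ⟨hc, h0, h1, hi, hw⟩ := hedge (f u) (f v) huv
    exact ⟨hc, h0, h1, hi, fun w => hw (f w)⟩
  · intro u v x y huv hxy hne
    refine hdisj _ _ _ _ huv hxy fun h => hne (Sym2.map.injective hf ?_)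
    rwa [Sym2.map_mk, Sym2.map_mk]

theorem MinimalCex.chi2_le_of_card_lt {Δ : ℕ} {V W : Type*} [Fintype V] [Fintype W]
    {G : SimpleGraph V} (hG : MinimalCex Δ G) {H : SimpleGraph W} (hH : IsPlanar H)
    (hdeg : ∀ w, degN H w ≤ Δ) (hcard : Fintype.card W < Fintype.card V) :
    chi2 H ≤ ((2 * Δ + 7 : ℕ) : ℕ∞) := by
  set σ := (Fintype.equivFin W).symm
  calc chi2 H ≤ chi2 (H.comap σ) :=
        chi2_mono_of_injective_hom (Iso.comap σ H).symm.toHom (Iso.comap σ H).symm.injective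
    _ ≤ _ := hG.2.2.2 _ _ (hH.comap σ.injective)
        (fun w => (degN_comap_le H σ.injective w).trans (hdeg _)) (Or.inl hcard)

theorem stmt13_general {V : Type*} [Fintype V] (G : SimpleGraph V)
    (Δ : ℕ) (hmin : MinimalCex Δ G)
    (e : PlaneEmbedding G) :
    ¬ ∃ (v u : V) (f₁ f₂ : e.Faces), degN G v = 3 ∧ f₁ ≠ f₂ ∧
      e.faceDeg f₁ = 3 ∧ e.faceDeg f₂ = 3 ∧
      e.VertexOnFace v f₁ ∧ e.VertexOnFace v f₂ ∧
      G.Adj v u ∧ degN G u ≤ min 10 Δ := by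
  classical
  rintro ⟨v, u, f₁, f₂, hv, hne, h₁, h₂, hv₁, hv₂, hvu, hu⟩
  obtain ⟨a, b, c, hpath⟩ := e.exists_isPathNeighborhood hv hne h₁ h₂ hv₁ hv₂
  have ⟨hplanar, ⟨hΔdeg, _⟩, hchi, _⟩ := hmin
  have hsquare : degN G.square v < 2 * Δ + 7 := by
    have := hpath.degN_square_add_four_le
    have := hΔdeg a; have := hΔdeg b; have := hΔdeg c
    have : degN G u ≤ 10 := hu.trans (min_le_left _ _)
    rcases hpath.eq_of_adj u hvu with rfl | rfl | rfl <;> omega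
  have hdel : chi2 (G.induce {v}ᶜ) ≤ ((2 * Δ + 7 : ℕ) : ℕ∞) :=
    hmin.chi2_le_of_card_lt (hplanar.comap Subtype.val_injective)
      (fun w => (degN_comap_le G Subtype.val_injective w).trans (hΔdeg _))
      (Fintype.card_lt_of_injective_not_surjective _ Subtype.val_injective
        fun hsurj => (hsurj v).elim fun w hw => w.2 hw)
  have hcol : G.square.Colorable (2 * Δ + 7) :=
    .of_induce_compl_singleton
      ((chromaticNumber_le_iff_colorable.1 hdel).mono_left hpath.square_induce_le) hsquare
  exact hchi.not_ge hcol.chromaticNumber_le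

/-- A minimal counterexample does not contain a vertex of degree 3 that is incident to
two triangular faces and adjacent to a vertex of degree at most `min(10, Δ)`. -/
theorem stmt13 {V : Type*} [Fintype V] [DecidableEq V] (G : SimpleGraph V)
    [DecidableRel G.Adj] (Δ : ℕ) (hΔ : 9 ≤ Δ) (hmin : MinimalCex Δ G)
    (e : PlaneEmbedding G) (hsphere : e.IsSphere) :
    ¬ ∃ (v u : V) (f₁ f₂ : e.Faces), degN G v = 3 ∧ f₁ ≠ f₂ ∧
      e.faceDeg f₁ = 3 ∧ e.faceDeg f₂ = 3 ∧
      e.VertexOnFace v f₁ ∧ e.VertexOnFace v f₂ ∧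
      G.Adj v u ∧ degN G u ≤ min 10 Δ :=
  stmt13_general G Δ hmin e
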